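/- For every pushdown system P = (Q, Γ, A, Δ), every q ∈ Q, every linked pair (α, β), all γ, γ′ ∈ RegStr(Γ), and all i, j ∈ ℕ: if rβ^iγ ∼ rβ^jγ for all r ∈ eats_α(q), and i ≠ j, then qαβ^iγ ∼ qαβ^jγ ∼ qαβ^ω. -/

import Mathlib

/-- Stack contents: finite (a list in `Γ*`) or infinite (a stream, used for `αβ^ω`). -/
def SC (Γ : Type) : Type := List Γ ⊕ Stream' Γ

namespace SC

/-- Put one symbol on top of a stack content. -/
def cons {Γ : Type} (X : Γ) : SC Γ → SC Γ
  | Sum.inl l => Sum.inl (X :: l)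
  | Sum.inr s => Sum.inr (Stream'.cons X s)

/-- Put a finite word on top of a stack content. -/
def push {Γ : Type} (γ : List Γ) : SC Γ → SC Γ
  | Sum.inl l => Sum.inl (γ ++ l)
  | Sum.inr s => Sum.inr (Stream'.appendStream' γ s)

end SC

/-- `listPow β i = β^i`, the `i`-fold concatenation of `β`. -/
def listPow {Γ : Type} (β : List Γ) : ℕ → List Γ
  | 0 => []
  | n + 1 => β ++ listPow β n

/-- The infinite stack content `β^ω` (for nonempty `β`). -/
def cycSC {Γ : Type} (β : List Γ) (h : β ≠ []) : SC Γ := Sum.inr (Stream'.cycle β h)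

/-- A pushdown system, given by its (finite) transition relation
`Δ ⊆ Q × Γ × A × Q × Γ*`. -/
structure PDS (Q Γ A : Type) where
  Δ : Finset (Q × Γ × A × Q × List Γ)

namespace PDS

variable {Q Γ A : Type}

/-- The size `|P| = |Q| + |Γ| + |A| + |Δ|` of a pushdown system. -/
def size (P : PDS Q Γ A) [Fintype Q] [Fintype Γ] [Fintype A] : ℕ :=
  Fintype.card Q + Fintype.card Γ + Fintype.card A + P.Δ.card

/-- Push-pop normal form: every transition pushes a word of length at most 2. -/
def PushPop (P : PDS Q Γ A) : Prop := ∀ δ ∈ P.Δ, δ.2.2.2.2.length ≤ 2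

/-- The `a`-labeled step relation on configurations: `pXσ →_a qγσ`. -/
def Step (P : PDS Q Γ A) (a : A) (s t : Q × SC Γ) : Prop :=
  ∃ p X q γ σ, (p, X, a, q, γ) ∈ P.Δ ∧ s = (p, SC.cons X σ) ∧ t = (q, SC.push γ σ)

/-- A step with some label. -/
def StepAny (P : PDS Q Γ A) (s t : Q × SC Γ) : Prop := ∃ a, P.Step a s t

/-- Reachability `→*`. -/
def Reach (P : PDS Q Γ A) : (Q × SC Γ) → (Q × SC Γ) → Prop :=
  Relation.ReflTransGen P.StepAny

/-- `StepN P n s t` : there is a path of length exactly `n` from `s` to `t`. -/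
def StepN (P : PDS Q Γ A) : ℕ → (Q × SC Γ) → (Q × SC Γ) → Prop
  | 0, s, t => s = t
  | n + 1, s, t => ∃ u, P.StepAny s u ∧ StepN P n u t

/-- `R` is a bisimulation. -/
def IsBisim (P : PDS Q Γ A) (R : (Q × SC Γ) → (Q × SC Γ) → Prop) : Prop :=
  ∀ s t, R s t → ∀ a,
    (∀ s', P.Step a s s' → ∃ t', P.Step a t t' ∧ R s' t') ∧
    (∀ t', P.Step a t t' → ∃ s', P.Step a s s' ∧ R s' t')

/-- Bisimilarity `s ∼ t`. -/
def Bisim (P : PDS Q Γ A) (s t : Q × SC Γ) : Prop := ∃ R, P.IsBisim R ∧ R s t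

/-- `eats_α(T) = { r | ∃ q ∈ T, qα →* r }`. -/
def eats (P : PDS Q Γ A) (α : List Γ) (T : Set Q) : Set Q :=
  {r | ∃ q ∈ T, P.Reach (q, Sum.inl α) (r, Sum.inl ([] : List Γ))}

/-- `(α, β)` (with `β` nonempty) is a linked pair if `eats_α = eats_{αβ}`
and `eats_β = eats_{ββ}`. -/
def LinkedPair (P : PDS Q Γ A) (α β : List Γ) : Prop :=
  β ≠ [] ∧ P.eats α = P.eats (α ++ β) ∧ P.eats β = P.eats (β ++ β)

/-- Applying one concrete transition `δ = (p, X, a, q, γ)`. -/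
def TStep (P : PDS Q Γ A) (δ : Q × Γ × A × Q × List Γ) (s t : Q × SC Γ) : Prop :=
  δ ∈ P.Δ ∧ ∃ σ, s = (δ.1, SC.cons δ.2.1 σ) ∧ t = (δ.2.2.2.1, SC.push δ.2.2.2.2 σ)

/-- `RunTo P ρ s t` : applying the sequence of transitions `ρ` starting from `s`
yields `t`. -/
def RunTo (P : PDS Q Γ A) : List (Q × Γ × A × Q × List Γ) → (Q × SC Γ) → (Q × SC Γ) → Prop
  | [], s, t => s = t
  | δ :: ρ, s, t => ∃ u, P.TStep δ s u ∧ RunTo P ρ u t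

/-- Bisimulation classes of configurations reachable from `s₀`
(the states of the bisimulation quotient of `L(P, s₀)`). -/
def classes (P : PDS Q Γ A) (s₀ : Q × SC Γ) : Set (Set (Q × SC Γ)) :=
  {c | ∃ s, P.Reach s₀ s ∧ c = {t | P.Reach s₀ t ∧ P.Bisim s t}}

/-- The `a`-labeled step relation on bisimulation classes. -/
def classStep (P : PDS Q Γ A) (a : A) (c d : Set (Q × SC Γ)) : Prop :=
  ∃ s ∈ c, ∃ t ∈ d, P.Step a s t

end PDS

/-- `StackGrowth` of a single transition: `|γ| − 1`. -/
def tGrowth {Q Γ A : Type} (δ : Q × Γ × A × Q × List Γ) : ℤ := (δ.2.2.2.2.length : ℤ) - 1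

/-- `StackGrowth` of a run. -/
def runGrowth {Q Γ A : Type} (ρ : List (Q × Γ × A × Q × List Γ)) : ℤ := (ρ.map tGrowth).sum

/-- A run is augmenting if every prefix has nonnegative stack growth. -/
def Augmenting {Q Γ A : Type} (ρ : List (Q × Γ × A × Q × List Γ)) : Prop :=
  ∀ i ≤ ρ.length, 0 ≤ runGrowth (ρ.take i)

/-- A digging sequence `(r 0, …, r h)` for `(q, α, β)`. -/
def DiggingSeq {Q Γ A : Type} (P : PDS Q Γ A) (q : Q) (α β : List Γ)
    (h : ℕ) (r : ℕ → Q) : Prop :=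
  r 0 ∈ P.eats α {q} ∧ ∀ d, 1 ≤ d → d ≤ h → r d ∈ P.eats β {r (d - 1)}

/-- A `β^ω`-avoiding digging sequence `(r 0, …, r h)` for `(q, α, β)`,
with respect to the configuration `qαβ^eγ` (where `e ≥ 1`). -/
def Avoiding {Q Γ A : Type} (P : PDS Q Γ A) (q : Q) (α β γ : List Γ) (hβ : β ≠ [])
    (e h : ℕ) (r : ℕ → Q) : Prop :=
  DiggingSeq P q α β h r ∧
  (∃ r' ∈ P.eats β {r 0},
      ¬ P.Bisim (r', Sum.inl (listPow β (e - 1) ++ γ)) (r', cycSC β hβ)) ∧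
  ∀ d, 1 ≤ d → d ≤ h →
    ¬ P.Bisim (r d, Sum.inl (listPow β (e - d) ++ γ)) (r d, cycSC β hβ)

/-- The class of elementary functions `ℕ^k → ℕ`: the smallest class containing
constants, projections, addition, multiplication and exponentiation, and closed
under composition. -/
inductive ElementaryFun : {k : ℕ} → ((Fin k → ℕ) → ℕ) → Prop
  | const {k : ℕ} (c : ℕ) : ElementaryFun (fun _ : Fin k → ℕ => c)
  | proj {k : ℕ} (i : Fin k) : ElementaryFun (fun v : Fin k → ℕ => v i)
  | add : ElementaryFun (fun v : Fin 2 → ℕ => v 0 + v 1)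
  | mul : ElementaryFun (fun v : Fin 2 → ℕ => v 0 * v 1)
  | exp : ElementaryFun (fun v : Fin 2 → ℕ => v 0 ^ v 1)
  | comp {k m : ℕ} (f : (Fin m → ℕ) → ℕ) (g : Fin m → (Fin k → ℕ) → ℕ) :
      ElementaryFun f → (∀ i, ElementaryFun (g i)) →
      ElementaryFun (fun v : Fin k → ℕ => f (fun i => g i v))

/-- A binary function `ℕ² → ℕ` is elementary. -/
def Elementary2 (φ : ℕ → ℕ → ℕ) : Prop :=
  ElementaryFun (fun v : Fin 2 → ℕ => φ (v 0) (v 1))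

/-- A ternary function `ℕ³ → ℕ` is elementary. -/
def Elementary3 (φ : ℕ → ℕ → ℕ → ℕ) : Prop :=
  ElementaryFun (fun v : Fin 3 → ℕ => φ (v 0) (v 1) (v 2))

/-- `prodSeg w i len = w (i+1) * w (i+2) * ⋯ * w (i+len+1)` in a semigroup. -/
def prodSeg {S : Type} [Semigroup S] (w : ℕ → S) (i : ℕ) : ℕ → S
  | 0 => w (i + 1)
  | len + 1 => prodSeg w i len * w (i + len + 2)

/-- `catSeg α i len = α (i+1) ++ α (i+2) ++ ⋯ ++ α (i+len+1)`. -/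
def catSeg {Γ : Type} (α : ℕ → List Γ) (i : ℕ) : ℕ → List Γ
  | 0 => α (i + 1)
  | len + 1 => catSeg α i len ++ α (i + len + 2)

/-!
Bisimilarity is a congruence for pushing a common finite word: `pθσ₁ ∼ pθσ₂` as soon as
`rσ₁ ∼ rσ₂` for every `r ∈ eats_θ(p)`, because both sides make the same moves until `θ` is
consumed. With `θ = α` this gives `qαβ^iγ ∼ qαβ^jγ`.

For `i < j` put `w = β^(j-i)` and `E = eats_α(q)`. Then `rβ^iγ ∼ rwβ^iγ` for `r ∈ E`,
`β^ω = wβ^ω`, and `eats_w(E) ⊆ E` because the pair is linked. Since `w` is nonempty, these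
guarded equations force `rβ^iγ ∼ rβ^ω` on `E` (a bisimulation up to bisimilarity), and the
congruence lifts this to `qαβ^iγ ∼ qαβ^ω`.
-/

namespace SC

variable {Γ : Type}

@[simp]
theorem push_nil (σ : SC Γ) : push [] σ = σ := by
  cases σ <;> rfl

theorem push_cons (X : Γ) (l : List Γ) (σ : SC Γ) : push (X :: l) σ = cons X (push l σ) := by
  cases σ <;> rfl

theorem push_append (l₁ l₂ : List Γ) (σ : SC Γ) : push (l₁ ++ l₂) σ = push l₁ (push l₂ σ) := by
  cases σ
  · exact congrArg Sum.inl (List.append_assoc l₁ l₂ _)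
  · exact congrArg Sum.inr (Stream'.append_append_stream l₁ l₂ _)

theorem cons_eq_cons {X Y : Γ} {σ τ : SC Γ} : cons X σ = cons Y τ ↔ X = Y ∧ σ = τ := by
  constructor
  · intro h
    rcases σ with l | s <;> rcases τ with l' | s'
    · injection h with h
      obtain ⟨rfl, rfl⟩ := List.cons.inj h
      exact ⟨rfl, rfl⟩
    · injection h
    · injection h
    · injection h with h
      obtain ⟨rfl, rfl⟩ := Stream'.cons_injective2 h
      exact ⟨rfl, rfl⟩
  · rintro ⟨rfl, rfl⟩
    rfl

end SC

theorem listPow_add {Γ : Type} (β : List Γ) (m n : ℕ) :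
    listPow β (m + n) = listPow β m ++ listPow β n := by
  induction m with
  | zero => simp [listPow]
  | succ m ih => rw [Nat.succ_add, listPow, listPow, ih, List.append_assoc]

theorem listPow_ne_nil {Γ : Type} {β : List Γ} (hβ : β ≠ []) {n : ℕ} (hn : n ≠ 0) :
    listPow β n ≠ [] := by
  obtain ⟨n, rfl⟩ := Nat.exists_eq_succ_of_ne_zero hn
  simp [listPow, hβ]

theorem push_listPow_cycSC {Γ : Type} {β : List Γ} (hβ : β ≠ []) (n : ℕ) :
    SC.push (listPow β n) (cycSC β hβ) = cycSC β hβ := by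
  induction n with
  | zero => rfl
  | succ n ih =>
    rw [listPow, SC.push_append, ih]
    exact congrArg Sum.inr (Stream'.cycle_eq β hβ).symm

namespace PDS

variable {Q Γ A : Type} {P : PDS Q Γ A} {a : A} {s t u : Q × SC Γ}

theorem Bisim.refl (P : PDS Q Γ A) (s : Q × SC Γ) : P.Bisim s s := by
  refine ⟨Eq, ?_, rfl⟩
  rintro s _ rfl a
  exact ⟨fun s' h => ⟨s', h, rfl⟩, fun t' h => ⟨t', h, rfl⟩⟩

theorem Bisim.symm (h : P.Bisim s t) : P.Bisim t s := by
  obtain ⟨R, hR, hst⟩ := h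
  refine ⟨flip R, fun x y hxy a => ?_, hst⟩
  obtain ⟨h₁, h₂⟩ := hR y x hxy a
  exact ⟨h₂, h₁⟩

theorem Bisim.exists_step_left {s' : Q × SC Γ} (h : P.Bisim s t) (hs : P.Step a s s') :
    ∃ t', P.Step a t t' ∧ P.Bisim s' t' := by
  obtain ⟨R, hR, hst⟩ := h
  obtain ⟨t', ht, hR'⟩ := (hR s t hst a).1 s' hs
  exact ⟨t', ht, R, hR, hR'⟩

theorem Bisim.exists_step_right {t' : Q × SC Γ} (h : P.Bisim s t) (ht : P.Step a t t') :
    ∃ s', P.Step a s s' ∧ P.Bisim s' t' := by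
  obtain ⟨s', hs, h'⟩ := h.symm.exists_step_left ht
  exact ⟨s', hs, h'.symm⟩

theorem Bisim.trans (h₁ : P.Bisim s t) (h₂ : P.Bisim t u) : P.Bisim s u := by
  refine ⟨Relation.Comp P.Bisim P.Bisim,
    fun x z ⟨y, hxy, hyz⟩ a => ⟨fun x' hx => ?_, fun z' hz => ?_⟩, t, h₁, h₂⟩
  · obtain ⟨y', hy, hxy'⟩ := hxy.exists_step_left hx
    obtain ⟨z', hz, hyz'⟩ := hyz.exists_step_left hy
    exact ⟨z', hz, y', hxy', hyz'⟩
  · obtain ⟨y', hy, hyz'⟩ := hyz.exists_step_right hz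
    obtain ⟨x', hx, hxy'⟩ := hxy.exists_step_right hy
    exact ⟨x', hx, y', hxy', hyz'⟩

section UpTo

def UpToBisim (P : PDS Q Γ A) (R : (Q × SC Γ) → (Q × SC Γ) → Prop) :
    (Q × SC Γ) → (Q × SC Γ) → Prop :=
  Relation.Comp P.Bisim (Relation.Comp (Relation.ReflGen R) P.Bisim)

def IsBisimUpTo (P : PDS Q Γ A) (R : (Q × SC Γ) → (Q × SC Γ) → Prop) : Prop :=
  ∀ s t, R s t → ∀ a,
    (∀ s', P.Step a s s' → ∃ t', P.Step a t t' ∧ P.UpToBisim R s' t') ∧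
    (∀ t', P.Step a t t' → ∃ s', P.Step a s s' ∧ P.UpToBisim R s' t')

variable {R : (Q × SC Γ) → (Q × SC Γ) → Prop}

theorem UpToBisim.of_bisim (h : P.Bisim s t) : P.UpToBisim R s t :=
  ⟨t, h, t, .refl, .refl P t⟩

theorem UpToBisim.of_rel (h : R s t) : P.UpToBisim R s t :=
  ⟨s, .refl P s, t, .single h, .refl P t⟩

theorem UpToBisim.congr {x y : Q × SC Γ} (h : P.UpToBisim R x y) (hsx : P.Bisim s x)
    (hyt : P.Bisim y t) : P.UpToBisim R s t := by
  obtain ⟨u, hxu, v, huv, hvt⟩ := h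
  exact ⟨u, hsx.trans hxu, v, huv, hvt.trans hyt⟩

theorem IsBisimUpTo.isBisim (h : P.IsBisimUpTo R) : P.IsBisim (P.UpToBisim R) := by
  rintro s t ⟨x, hsx, y, hxy, hyt⟩ a
  constructor
  · intro s' hs
    obtain ⟨x', hx, hsx'⟩ := hsx.exists_step_left hs
    rcases hxy with _ | hxy
    · obtain ⟨t', ht, hxt'⟩ := hyt.exists_step_left hx
      exact ⟨t', ht, .of_bisim (hsx'.trans hxt')⟩
    · obtain ⟨y', hy, hxy'⟩ := (h x y hxy a).1 x' hx
      obtain ⟨t', ht, hyt'⟩ := hyt.exists_step_left hy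
      exact ⟨t', ht, hxy'.congr hsx' hyt'⟩
  · intro t' ht
    obtain ⟨y', hy, hyt'⟩ := hyt.exists_step_right ht
    rcases hxy with _ | hxy
    · obtain ⟨s', hs, hsy'⟩ := hsx.exists_step_right hy
      exact ⟨s', hs, .of_bisim (hsy'.trans hyt')⟩
    · obtain ⟨x', hx, hxy'⟩ := (h x y hxy a).2 y' hy
      obtain ⟨s', hs, hsx'⟩ := hsx.exists_step_right hx
      exact ⟨s', hs, hxy'.congr hsx' hyt'⟩

theorem IsBisimUpTo.bisim (h : P.IsBisimUpTo R) (hst : P.UpToBisim R s t) : P.Bisim s t :=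
  ⟨_, h.isBisim, hst⟩

end UpTo

theorem step_cons_iff {p : Q} {X : Γ} {σ : SC Γ} :
    P.Step a (p, SC.cons X σ) t ↔ ∃ q γ, (p, X, a, q, γ) ∈ P.Δ ∧ t = (q, SC.push γ σ) := by
  constructor
  · rintro ⟨p', X', q, γ, σ', hδ, hs, rfl⟩
    obtain ⟨rfl, hc⟩ := Prod.mk.inj hs
    obtain ⟨rfl, rfl⟩ := SC.cons_eq_cons.1 hc
    exact ⟨q, γ, hδ, rfl⟩
  · rintro ⟨q, γ, hδ, rfl⟩
    exact ⟨p, X, q, γ, σ, hδ, rfl, rfl⟩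

theorem stepAny_inl_cons_iff {p : Q} {X : Γ} {l : List Γ} :
    P.StepAny (p, Sum.inl (X :: l)) t ↔
      ∃ a q γ, (p, X, a, q, γ) ∈ P.Δ ∧ t = (q, Sum.inl (γ ++ l)) :=
  exists_congr fun _ => step_cons_iff (σ := Sum.inl l)

theorem step_push_cons_transfer {p : Q} {X : Γ} {θ : List Γ} {σ : SC Γ}
    (h : P.Step a (p, SC.push (X :: θ) σ) t) (σ' : SC Γ) :
    ∃ q θ', P.StepAny (p, Sum.inl (X :: θ)) (q, Sum.inl θ') ∧ t = (q, SC.push θ' σ) ∧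
      P.Step a (p, SC.push (X :: θ) σ') (q, SC.push θ' σ') := by
  rw [SC.push_cons, step_cons_iff] at h
  obtain ⟨q, γ, hδ, rfl⟩ := h
  refine ⟨q, γ ++ θ, stepAny_inl_cons_iff.2 ⟨a, q, γ, hδ, rfl⟩, by rw [SC.push_append], ?_⟩
  rw [SC.push_cons, SC.push_append]
  exact step_cons_iff.2 ⟨q, γ, hδ, rfl⟩

theorem Reach.append_right {p r : Q} {θ θ' : List Γ}
    (h : P.Reach (p, Sum.inl θ) (r, Sum.inl θ')) (η : List Γ) :
    P.Reach (p, Sum.inl (θ ++ η)) (r, Sum.inl (θ' ++ η)) := by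
  have hcons : ∀ X σ, Sum.map (· ++ η) id (SC.cons X σ) = SC.cons X (Sum.map (· ++ η) id σ) := by
    intro X σ
    cases σ <;> rfl
  have hpush : ∀ γ σ, Sum.map (· ++ η) id (SC.push γ σ) = SC.push γ (Sum.map (· ++ η) id σ) := by
    intro γ σ
    cases σ
    · exact congrArg Sum.inl (List.append_assoc _ _ _)
    · rfl
  refine Relation.ReflTransGen.lift (Prod.map id (Sum.map (· ++ η) id))
    (fun _ _ ⟨a, p, X, q, γ, σ, hδ, hs, ht⟩ => ?_) _ _ h
  subst hs ht
  exact ⟨a, p, X, q, γ, _, hδ, congrArg _ (hcons X σ), congrArg _ (hpush γ σ)⟩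

theorem Reach.exists_of_append {p r : Q} {θ η : List Γ}
    (h : P.Reach (p, Sum.inl (θ ++ η)) (r, Sum.inl [])) :
    ∃ r', P.Reach (p, Sum.inl θ) (r', Sum.inl []) ∧ P.Reach (r', Sum.inl η) (r, Sum.inl []) := by
  generalize hs : ((p, Sum.inl (θ ++ η)) : Q × SC Γ) = s at h
  generalize ht : ((r, Sum.inl []) : Q × SC Γ) = t at h
  induction h using Relation.ReflTransGen.head_induction_on generalizing p θ with
  | refl =>
    subst ht
    obtain ⟨rfl, hθη⟩ := Prod.mk.inj hs
    obtain ⟨rfl, rfl⟩ := List.append_eq_nil_iff.1 (Sum.inl.inj hθη)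
    exact ⟨p, .refl, .refl⟩
  | head hstep hrest ih =>
    subst hs ht
    cases θ with
    | nil => exact ⟨p, .refl, .head hstep hrest⟩
    | cons X θ =>
      obtain ⟨a, q, γ, hδ, rfl⟩ := stepAny_inl_cons_iff.1 hstep
      obtain ⟨r', h₁, h₂⟩ := @ih q (γ ++ θ) (by rw [List.append_assoc]; rfl)
      exact ⟨r', .head (stepAny_inl_cons_iff.2 ⟨a, q, γ, hδ, rfl⟩) h₁, h₂⟩

theorem self_mem_eats_nil (p : Q) : p ∈ P.eats [] {p} :=
  ⟨p, rfl, .refl⟩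

theorem eats_mono (θ : List Γ) : Monotone (P.eats θ) :=
  fun _ _ hT _ ⟨p, hp, hr⟩ => ⟨p, hT hp, hr⟩

theorem eats_subset_of_stepAny {p q : Q} {θ θ' : List Γ}
    (h : P.StepAny (p, Sum.inl θ) (q, Sum.inl θ')) : P.eats θ' {q} ⊆ P.eats θ {p} := by
  rintro r ⟨_, rfl, hr⟩
  exact ⟨p, rfl, .head h hr⟩

theorem eats_append (θ η : List Γ) (T : Set Q) :
    P.eats (θ ++ η) T = P.eats η (P.eats θ T) := by
  ext r
  constructor
  · rintro ⟨p, hp, hr⟩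
    obtain ⟨r', h₁, h₂⟩ := hr.exists_of_append
    exact ⟨r', ⟨p, hp, h₁⟩, h₂⟩
  · rintro ⟨r', ⟨p, hp, h₁⟩, h₂⟩
    exact ⟨p, hp, Relation.ReflTransGen.trans (h₁.append_right η) h₂⟩

theorem LinkedPair.eats_append_listPow {α β : List Γ} (h : P.LinkedPair α β) (k : ℕ) :
    P.eats (α ++ listPow β k) = P.eats α := by
  induction k with
  | zero => simp [listPow]
  | succ k ih =>
    funext T
    rw [listPow, ← List.append_assoc, eats_append, ← h.2.1, ← eats_append, ih]

def CommonTop (C : Q → List Γ → Prop) (σ₁ σ₂ : SC Γ) (s t : Q × SC Γ) : Prop :=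
  ∃ p θ, θ ≠ [] ∧ C p θ ∧ s = (p, SC.push θ σ₁) ∧ t = (p, SC.push θ σ₂)

theorem bisim_push_of_closed {C : Q → List Γ → Prop} {σ₁ σ₂ : SC Γ}
    (hC : ∀ {p q θ θ'}, C p θ → P.StepAny (p, Sum.inl θ) (q, Sum.inl θ') → C q θ')
    (hbase : ∀ r, C r [] → P.UpToBisim (CommonTop C σ₁ σ₂) (r, σ₁) (r, σ₂))
    {p : Q} {θ : List Γ} (hp : C p θ) : P.Bisim (p, SC.push θ σ₁) (p, SC.push θ σ₂) := by
  have hup : ∀ {q θ'}, C q θ' →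
      P.UpToBisim (CommonTop C σ₁ σ₂) (q, SC.push θ' σ₁) (q, SC.push θ' σ₂) := by
    intro q θ' hq
    rcases eq_or_ne θ' [] with rfl | hθ'
    · simpa using hbase q hq
    · exact .of_rel ⟨q, θ', hθ', hq, rfl, rfl⟩
  have hR : P.IsBisimUpTo (CommonTop C σ₁ σ₂) := by
    rintro _ _ ⟨p, θ, hθ, hp, rfl, rfl⟩ a
    obtain ⟨X, θ, rfl⟩ := List.exists_cons_of_ne_nil hθ
    constructor
    · intro s' hs
      obtain ⟨q, θ', hpq, rfl, ht⟩ := step_push_cons_transfer hs σ₂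
      exact ⟨_, ht, hup (hC hp hpq)⟩
    · intro t' ht
      obtain ⟨q, θ', hpq, rfl, hs⟩ := step_push_cons_transfer ht σ₁
      exact ⟨_, hs, hup (hC hp hpq)⟩
  exact hR.bisim (hup hp)

theorem bisim_push_of_forall_eats {p : Q} {θ : List Γ} {σ₁ σ₂ : SC Γ}
    (h : ∀ r ∈ P.eats θ {p}, P.Bisim (r, σ₁) (r, σ₂)) :
    P.Bisim (p, SC.push θ σ₁) (p, SC.push θ σ₂) :=
  bisim_push_of_closed (C := fun p θ => ∀ r ∈ P.eats θ {p}, P.Bisim (r, σ₁) (r, σ₂))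
    (fun hp hpq r hr => hp r (eats_subset_of_stepAny hpq hr))
    (fun r hr => .of_bisim (hr r (self_mem_eats_nil r))) h

/-- Guarded equations `X = wX` have unique solutions up to bisimilarity. -/
theorem bisim_of_guarded {E : Set Q} {w : List Γ} (hw : w ≠ []) (hE : P.eats w E ⊆ E)
    {σ τ : SC Γ} (hσ : ∀ r ∈ E, P.Bisim (r, σ) (r, SC.push w σ)) (hτ : SC.push w τ = τ)
    {r : Q} (hr : r ∈ E) : P.Bisim (r, σ) (r, τ) := by
  have hwE : ∀ {r}, r ∈ E → P.eats w {r} ⊆ E :=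
    fun hr => (eats_mono w (Set.singleton_subset_iff.2 hr)).trans hE
  have hbase : ∀ r ∈ E,
      P.UpToBisim (CommonTop (fun p θ => P.eats θ {p} ⊆ E) σ τ) (r, σ) (r, τ) :=
    fun r hr => ⟨_, hσ r hr, _, .single ⟨r, w, hw, hwE hr, rfl, rfl⟩, by rw [hτ]; exact .refl P _⟩
  have hpush : P.Bisim (r, SC.push w σ) (r, SC.push w τ) :=
    bisim_push_of_closed (fun hp hpq => (eats_subset_of_stepAny hpq).trans hp)
      (fun r hr => hbase r (hr (self_mem_eats_nil r))) (hwE hr)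
  rw [hτ] at hpush
  exact (hσ r hr).trans hpush

theorem LinkedPair.bisim_push_listPow_cycSC {α β : List Γ} (hβ : β ≠ [])
    (hlp : P.LinkedPair α β) {q : Q} {γ : SC Γ} {i j : ℕ} (hij : i < j)
    (hbis : ∀ r ∈ P.eats α {q},
      P.Bisim (r, SC.push (listPow β i) γ) (r, SC.push (listPow β j) γ)) :
    P.Bisim (q, SC.push (α ++ listPow β i) γ) (q, SC.push α (cycSC β hβ)) := by
  rw [SC.push_append]
  refine bisim_push_of_forall_eats fun r hr =>
    bisim_of_guarded (listPow_ne_nil hβ (Nat.sub_ne_zero_of_lt hij)) ?_ ?_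
      (push_listPow_cycSC hβ _) hr
  · rw [← eats_append, hlp.eats_append_listPow]
  · intro r hr
    rw [← SC.push_append, ← listPow_add, Nat.sub_add_cancel hij.le]
    exact hbis r hr

end PDS

theorem stmt_11_general (Q Γ A : Type) (P : PDS Q Γ A) (q : Q) (α β : List Γ) (hβ : β ≠ [])
    (hlp : P.LinkedPair α β) (γ : SC Γ) (i j : ℕ)
    (hbis : ∀ r ∈ P.eats α {q},
      P.Bisim (r, SC.push (listPow β i) γ) (r, SC.push (listPow β j) γ))
    (hij : i ≠ j) :
    P.Bisim (q, SC.push (α ++ listPow β i) γ) (q, SC.push (α ++ listPow β j) γ) ∧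
    P.Bisim (q, SC.push (α ++ listPow β i) γ) (q, SC.push α (cycSC β hβ)) ∧
    P.Bisim (q, SC.push (α ++ listPow β j) γ) (q, SC.push α (cycSC β hβ)) := by
  have hαij : P.Bisim (q, SC.push (α ++ listPow β i) γ) (q, SC.push (α ++ listPow β j) γ) := by
    simpa only [SC.push_append] using PDS.bisim_push_of_forall_eats hbis
  rcases hij.lt_or_gt with hij | hji
  · have hi := hlp.bisim_push_listPow_cycSC hβ hij hbis
    exact ⟨hαij, hi, hαij.symm.trans hi⟩
  · have hj := hlp.bisim_push_listPow_cycSC hβ hji fun r hr => (hbis r hr).symm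
    exact ⟨hαij, hαij.trans hj, hj⟩

/-- For a linked pair `(α, β)`: if `rβ^iγ ∼ rβ^jγ` for all `r ∈ eats_α(q)` and
`i ≠ j`, then `qαβ^iγ ∼ qαβ^jγ ∼ qαβ^ω`. -/
theorem stmt_11 (Q Γ A : Type) (P : PDS Q Γ A) (q : Q) (α β : List Γ) (hβ : β ≠ [])
    (hlp : P.LinkedPair α β) (γ γ' : SC Γ) (i j : ℕ)
    (hbis : ∀ r ∈ P.eats α {q},
      P.Bisim (r, SC.push (listPow β i) γ) (r, SC.push (listPow β j) γ))
    (hij : i ≠ j) :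
    P.Bisim (q, SC.push (α ++ listPow β i) γ) (q, SC.push (α ++ listPow β j) γ) ∧
    P.Bisim (q, SC.push (α ++ listPow β i) γ) (q, SC.push α (cycSC β hβ)) ∧
    P.Bisim (q, SC.push (α ++ listPow β j) γ) (q, SC.push α (cycSC β hβ)) :=
  stmt_11_general Q Γ A P q α β hβ hlp γ i j hbis hij
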